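/- Let H ∈ (1/2,1). There exists a constant c = c(H) > 0 such that for every integer n ≥ 1, ∫_0^1 R(1,z)^n z^{−Hn−H} (1−z)^{2H−2} dz ≤ c · n^{−(2H−1)/(2H)}. (This is the sharp decay rate of the one-dimensional integral appearing in the diagonal term A(n) of the Watanabe-norm series of the fractional current; note the rate n^{−(2H−1)/(2H)} = n^{−1+1/(2H)}.) -/

import Mathlib

/-!
Write `f(z) = R(1,z) z^{-H}`, so that the integrand is `f(z)^n · z^{-H} (1-z)^{2H-2}`.
With `a = z^H`, `b = (1-z)^H` one has `1 - f = (a + b - 1)(1 + b - a) / (2a)`, and the elementary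
inequality `a + b - 1 ≥ (1 - 2^{H-1}) a b` gives `f(z) ≤ exp (-κ (1-z)^{2H})` with
`κ = (1 - 2^{H-1}) / 2 > 0`. Near `z = 1` the integral is then dominated by the Gamma integral
`∫₀^∞ u^{2H-2} e^{-nκ u^{2H}} du = Γ((2H-1)/(2H)) (nκ)^{-(2H-1)/(2H)} / (2H)`; on `[0, 1/2]` the
exponential is at most `e^{-nκ/4}`, which decays faster.
-/

open MeasureTheory Real

/-- The covariance function of fractional Brownian motion with Hurst parameter `H`:
`R(t,s) = (1/2)(t^{2H}+s^{2H}−|t−s|^{2H})`. -/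
noncomputable def fbmCov (H t s : ℝ) : ℝ :=
  (t ^ (2 * H) + s ^ (2 * H) - |t - s| ^ (2 * H)) / 2

open Set

lemma exp_neg_le_rpow_neg {x α : ℝ} (hx : 0 < x) (hα0 : 0 ≤ α) (hα1 : α ≤ 1) :
    exp (-x) ≤ x ^ (-α) := by
  have hbern : x ^ α ≤ 1 + α * (x - 1) := by
    simpa using rpow_one_add_le_one_add_mul_self (s := x - 1) (by linarith) hα0 hα1
  rw [exp_neg, rpow_neg hx.le]
  gcongr
  nlinarith [add_one_le_exp x]

lemma half_rpow_le_two {p : ℝ} (hp : -1 ≤ p) : (1 / 2 : ℝ) ^ p ≤ 2 := by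
  calc (1 / 2 : ℝ) ^ p ≤ (1 / 2) ^ (-1 : ℝ) :=
        rpow_le_rpow_of_exponent_ge (by norm_num) (by norm_num) hp
    _ = 2 := by norm_num [rpow_neg_one]

lemma one_sub_two_rpow_mul_le_rpow_add_rpow_sub_one_of_le_half {H z : ℝ} (hH0 : 0 ≤ H)
    (hH1 : H ≤ 1) (hz0 : 0 ≤ z) (hz : z ≤ 1 / 2) :
    (1 - 2 ^ (H - 1)) * (z ^ H * (1 - z) ^ H) ≤ z ^ H + (1 - z) ^ H - 1 := by
  have hsplit : z = z ^ H * z ^ (1 - H) := by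
    rw [← rpow_add' hz0 (by norm_num), add_sub_cancel, rpow_one]
  have hsmall : z ^ (1 - H) ≤ 2 ^ (H - 1) := by
    calc z ^ (1 - H) ≤ (1 / 2) ^ (1 - H) := rpow_le_rpow hz0 hz (by linarith)
      _ = 2 ^ (H - 1) := by rw [one_div, inv_rpow zero_le_two, ← rpow_neg zero_le_two, neg_sub]
  have hconcave : 1 - z ≤ (1 - z) ^ H := self_le_rpow_of_le_one (by linarith) (by linarith) hH1
  have hle_one : (1 - z) ^ H ≤ 1 := rpow_le_one (by linarith) (by linarith) hH0
  have hc : 0 ≤ 1 - (2 : ℝ) ^ (H - 1) :=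
    sub_nonneg.2 (rpow_le_one_of_one_le_of_nonpos one_le_two (by linarith))
  have hzH : 0 ≤ z ^ H := rpow_nonneg hz0 H
  nlinarith [mul_le_mul_of_nonneg_left hsmall hzH,
    mul_le_mul_of_nonneg_left hle_one (mul_nonneg hc hzH)]

lemma one_sub_two_rpow_mul_le_rpow_add_rpow_sub_one {H z : ℝ} (hH0 : 0 ≤ H)
    (hH1 : H ≤ 1) (hz0 : 0 ≤ z) (hz1 : z ≤ 1) :
    (1 - 2 ^ (H - 1)) * (z ^ H * (1 - z) ^ H) ≤ z ^ H + (1 - z) ^ H - 1 := by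
  rcases le_total z (1 / 2) with hz | hz
  · exact one_sub_two_rpow_mul_le_rpow_add_rpow_sub_one_of_le_half hH0 hH1 hz0 hz
  · have := one_sub_two_rpow_mul_le_rpow_add_rpow_sub_one_of_le_half (z := 1 - z) hH0 hH1
      (by linarith) (by linarith)
    rw [sub_sub_cancel] at this
    linarith

lemma intervalIntegral_rpow_mul_exp_neg_mul_rpow_le {p q b a : ℝ} (hp : 0 < p) (hq : -1 < q)
    (hb : 0 < b) (ha : 0 ≤ a) :
    ∫ x in 0..a, x ^ q * exp (-b * x ^ p) ≤
      b ^ (-(q + 1) / p) * (1 / p) * Gamma ((q + 1) / p) := by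
  rw [intervalIntegral.integral_of_le ha, ← integral_rpow_mul_exp_neg_mul_rpow hp hq hb]
  refine setIntegral_mono_set (integrableOn_rpow_mul_exp_neg_mul_rpow hq hp hb) ?_
    Ioc_subset_Ioi_self.eventuallyLE
  filter_upwards [ae_restrict_mem measurableSet_Ioi] with x hx
  exact mul_nonneg (rpow_nonneg (le_of_lt hx) _) (exp_nonneg _)

lemma intervalIntegral_mono_of_nonneg_Ioo {f g : ℝ → ℝ} {a b : ℝ} (hab : a ≤ b)
    (hf : ∀ x ∈ Ioo a b, 0 ≤ f x) (hfg : ∀ x ∈ Ioo a b, f x ≤ g x)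
    (hg : IntervalIntegrable g volume a b) :
    ∫ x in a..b, f x ≤ ∫ x in a..b, g x := by
  simp only [intervalIntegral.integral_of_le hab, integral_Ioc_eq_integral_Ioo]
  exact setIntegral_mono_of_nonneg hf hfg (hg.1.mono_set Ioo_subset_Ioc_self)

lemma fbmCov_one_left {H z : ℝ} (hz0 : 0 ≤ z) (hz1 : z ≤ 1) :
    fbmCov H 1 z = (1 + (z ^ H) ^ 2 - ((1 - z) ^ H) ^ 2) / 2 := by
  rw [fbmCov, one_rpow, abs_of_nonneg (sub_nonneg.2 hz1), mul_comm 2 H,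
    rpow_mul hz0, rpow_mul (sub_nonneg.2 hz1), rpow_two, rpow_two]

lemma fbmCov_one_left_nonneg {H z : ℝ} (hH : 0 ≤ H) (hz0 : 0 ≤ z) (hz1 : z ≤ 1) :
    0 ≤ fbmCov H 1 z := by
  rw [fbmCov_one_left hz0 hz1]
  have : (1 - z) ^ H ≤ 1 := rpow_le_one (by linarith) (by linarith) hH
  nlinarith [rpow_nonneg (sub_nonneg.2 hz1) H, rpow_nonneg hz0 H]

lemma fbmCov_one_left_mul_rpow_neg_le {H z : ℝ} (hH0 : 0 ≤ H) (hH1 : H ≤ 1) (hz0 : 0 < z)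
    (hz1 : z ≤ 1) :
    fbmCov H 1 z * z ^ (-H) ≤ 1 - (1 - 2 ^ (H - 1)) / 2 * (1 - z) ^ (2 * H) := by
  have hineq := one_sub_two_rpow_mul_le_rpow_add_rpow_sub_one hH0 hH1 hz0.le hz1
  set c : ℝ := 1 - 2 ^ (H - 1)
  have hc : 0 ≤ c := sub_nonneg.2 (rpow_le_one_of_one_le_of_nonpos one_le_two (by linarith))
  set a := z ^ H with ha_def
  set b := (1 - z) ^ H
  have ha : 0 < a := rpow_pos_of_pos hz0 H
  have ha1 : a ≤ 1 := rpow_le_one hz0.le hz1 hH0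
  have hb : 0 ≤ b := rpow_nonneg (sub_nonneg.2 hz1) H
  have hfactor : c * (a * b) * b ≤ (a + b - 1) * (b + 1 - a) :=
    mul_le_mul hineq (by linarith) hb (by nlinarith [mul_nonneg hc (mul_nonneg ha.le hb)])
  rw [fbmCov_one_left hz0.le hz1, rpow_neg hz0.le, ← ha_def, mul_comm 2 H,
    rpow_mul (sub_nonneg.2 hz1), rpow_two, ← div_eq_mul_inv, div_le_iff₀ ha]
  nlinarith

lemma fbmCov_one_left_mul_rpow_neg_pow_le {H z : ℝ} (hH0 : 0 ≤ H) (hH1 : H ≤ 1) (hz0 : 0 < z)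
    (hz1 : z ≤ 1) (n : ℕ) :
    (fbmCov H 1 z * z ^ (-H)) ^ n ≤ exp (-(n * ((1 - 2 ^ (H - 1)) / 2)) * (1 - z) ^ (2 * H)) := by
  have h0 : 0 ≤ fbmCov H 1 z * z ^ (-H) :=
    mul_nonneg (fbmCov_one_left_nonneg hH0 hz0.le hz1) (rpow_nonneg hz0.le _)
  calc (fbmCov H 1 z * z ^ (-H)) ^ n
      ≤ exp (-((1 - 2 ^ (H - 1)) / 2 * (1 - z) ^ (2 * H))) ^ n := by
        gcongr
        exact (fbmCov_one_left_mul_rpow_neg_le hH0 hH1 hz0 hz1).trans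
          (by linarith [add_one_le_exp (-((1 - 2 ^ (H - 1)) / 2 * (1 - z) ^ (2 * H)))])
    _ = _ := by rw [← exp_nat_mul]; ring_nf

lemma fbmCov_integrand_le {H z : ℝ} (hH0 : 0 ≤ H) (hH1 : H ≤ 1) (hz0 : 0 < z) (hz1 : z ≤ 1)
    (n : ℕ) :
    fbmCov H 1 z ^ n * z ^ (-(H * n) - H) * (1 - z) ^ (2 * H - 2) ≤
      z ^ (-H) * (1 - z) ^ (2 * H - 2) *
        exp (-(n * ((1 - 2 ^ (H - 1)) / 2)) * (1 - z) ^ (2 * H)) := by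
  have hsplit : z ^ (-(H * n) - H) = (z ^ (-H)) ^ n * z ^ (-H) := by
    rw [← rpow_mul_natCast hz0.le, ← rpow_add hz0]
    ring_nf
  have hw : 0 ≤ z ^ (-H) * (1 - z) ^ (2 * H - 2) :=
    mul_nonneg (rpow_nonneg hz0.le _) (rpow_nonneg (sub_nonneg.2 hz1) _)
  calc fbmCov H 1 z ^ n * z ^ (-(H * n) - H) * (1 - z) ^ (2 * H - 2)
      = (fbmCov H 1 z * z ^ (-H)) ^ n * (z ^ (-H) * (1 - z) ^ (2 * H - 2)) := by
        rw [hsplit, mul_pow]; ring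
    _ ≤ _ := by
        rw [mul_comm _ (exp _)]
        exact mul_le_mul_of_nonneg_right
          (fbmCov_one_left_mul_rpow_neg_pow_le hH0 hH1 hz0 hz1 n) hw

/-- Splitting `[0,1]` at `1/2`: the factor `z^{-H}` is bounded on the right half, the
exponential is uniformly small on the left half. -/
noncomputable def fbmMajorant (H b z : ℝ) : ℝ :=
  2 * ((1 - z) ^ (2 * H - 2) * exp (-b * (1 - z) ^ (2 * H))) + 2 * exp (-b / 4) * z ^ (-H)

lemma rpow_mul_exp_le_fbmMajorant {H b z : ℝ} (hH0 : 1 / 2 ≤ H) (hH1 : H ≤ 1) (hb : 0 ≤ b)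
    (hz0 : 0 < z) (hz1 : z ≤ 1) :
    z ^ (-H) * (1 - z) ^ (2 * H - 2) * exp (-b * (1 - z) ^ (2 * H)) ≤ fbmMajorant H b z := by
  have hzH : 0 ≤ z ^ (-H) := rpow_nonneg hz0.le _
  have hw : 0 ≤ (1 - z) ^ (2 * H - 2) := rpow_nonneg (sub_nonneg.2 hz1) _
  have hE : 0 ≤ exp (-b * (1 - z) ^ (2 * H)) := exp_nonneg _
  rcases le_total (1 / 2) z with hz | hz
  · have hzH2 : z ^ (-H) ≤ 2 :=
      (rpow_le_rpow_of_nonpos (by norm_num) hz (by linarith)).trans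
        (half_rpow_le_two (by linarith))
    have : 0 ≤ 2 * exp (-b / 4) * z ^ (-H) := by positivity
    unfold fbmMajorant
    nlinarith [mul_le_mul_of_nonneg_right hzH2 (mul_nonneg hw hE)]
  · have hw2 : (1 - z) ^ (2 * H - 2) ≤ 2 :=
      (rpow_le_rpow_of_nonpos (by norm_num) (by linarith) (by linarith)).trans
        (half_rpow_le_two (by linarith))
    have hquarter : 1 / 4 ≤ (1 - z) ^ (2 * H) := by
      calc (1 / 4 : ℝ) = (1 / 2) ^ (2 : ℝ) := by norm_num
        _ ≤ (1 / 2) ^ (2 * H) :=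
            rpow_le_rpow_of_exponent_ge (by norm_num) (by norm_num) (by linarith)
        _ ≤ (1 - z) ^ (2 * H) := rpow_le_rpow (by norm_num) (by linarith) (by linarith)
    have hE4 : exp (-b * (1 - z) ^ (2 * H)) ≤ exp (-b / 4) := exp_le_exp.2 (by nlinarith)
    have : 0 ≤ 2 * ((1 - z) ^ (2 * H - 2) * exp (-b * (1 - z) ^ (2 * H))) := by positivity
    unfold fbmMajorant
    nlinarith [mul_le_mul hw2 hE4 hE zero_le_two, mul_le_mul_of_nonneg_left
      (mul_le_mul hw2 hE4 hE zero_le_two) hzH]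

lemma intervalIntegrable_one_sub_rpow_mul_exp_neg_mul_rpow {p q b : ℝ} (hp : 0 < p)
    (hq : -1 < q) (hb : 0 < b) :
    IntervalIntegrable (fun z : ℝ => (1 - z) ^ q * exp (-b * (1 - z) ^ p)) volume 0 1 := by
  have h : IntervalIntegrable (fun u : ℝ => u ^ q * exp (-b * u ^ p)) volume 0 1 :=
    (intervalIntegrable_iff_integrableOn_Ioc_of_le zero_le_one).2 <|
      (integrableOn_rpow_mul_exp_neg_mul_rpow hq hp hb).mono_set Ioc_subset_Ioi_self
  simpa using (h.comp_sub_left 1).symm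

lemma intervalIntegrable_fbmMajorant {H b : ℝ} (hH0 : 1 / 2 < H) (hH1 : H < 1) (hb : 0 < b) :
    IntervalIntegrable (fbmMajorant H b) volume 0 1 :=
  ((intervalIntegrable_one_sub_rpow_mul_exp_neg_mul_rpow (by linarith) (by linarith) hb).const_mul
    2).add ((intervalIntegral.intervalIntegrable_rpow' (by linarith)).const_mul _)

lemma integral_fbmMajorant_le {H b : ℝ} (hH0 : 1 / 2 < H) (hH1 : H < 1) (hb : 0 < b) :
    ∫ z in 0..1, fbmMajorant H b z ≤
      (Gamma ((2 * H - 1) / (2 * H)) / H + 2 * 4 ^ ((2 * H - 1) / (2 * H)) / (1 - H)) *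
        b ^ (-((2 * H - 1) / (2 * H))) := by
  set α := (2 * H - 1) / (2 * H)
  have hexp : exp (-b / 4) ≤ 4 ^ α * b ^ (-α) := by
    calc exp (-b / 4) = exp (-(b / 4)) := by ring_nf
      _ ≤ (b / 4) ^ (-α) := exp_neg_le_rpow_neg (by positivity)
          (div_nonneg (by linarith) (by linarith)) ((div_le_one (by linarith)).2 (by linarith))
      _ = 4 ^ α * b ^ (-α) := by
          rw [div_rpow hb.le (by norm_num), rpow_neg (by norm_num : (0 : ℝ) ≤ 4), div_inv_eq_mul,
            mul_comm]
  have hgauss : ∫ u in 0..1, u ^ (2 * H - 2) * exp (-b * u ^ (2 * H)) ≤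
      b ^ (-α) * (1 / (2 * H)) * Gamma α := by
    have h := intervalIntegral_rpow_mul_exp_neg_mul_rpow_le (by linarith : 0 < 2 * H)
      (by linarith : -1 < 2 * H - 2) hb zero_le_one
    rwa [show 2 * H - 2 + 1 = 2 * H - 1 by ring, neg_div] at h
  have hreflect := intervalIntegral.integral_comp_sub_left
    (fun u : ℝ => u ^ (2 * H - 2) * exp (-b * u ^ (2 * H))) (a := 0) (b := 1) 1
  have hpow : ∫ z in (0 : ℝ)..1, z ^ (-H) = 1 / (1 - H) := by
    rw [integral_rpow (Or.inl (by linarith)), one_rpow, zero_rpow (by linarith)]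
    ring
  simp only [sub_zero, sub_self] at hreflect
  simp only [fbmMajorant]
  rw [intervalIntegral.integral_add
      ((intervalIntegrable_one_sub_rpow_mul_exp_neg_mul_rpow (by linarith) (by linarith)
        hb).const_mul 2) ((intervalIntegral.intervalIntegrable_rpow' (by linarith)).const_mul _),
    intervalIntegral.integral_const_mul, intervalIntegral.integral_const_mul, hreflect, hpow]
  have h1H : 0 < 1 - H := by linarith
  calc _ ≤ 2 * (b ^ (-α) * (1 / (2 * H)) * Gamma α) +
        2 * (4 ^ α * b ^ (-α)) * (1 / (1 - H)) := by gcongr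
    _ = _ := by field_simp

/-- for `H ∈ (1/2,1)`, there is `c = c(H) > 0` such that for every `n ≥ 1`,
`∫_0^1 R(1,z)^n z^{−Hn−H} (1−z)^{2H−2} dz ≤ c · n^{−(2H−1)/(2H)}`. -/
theorem fbm_diagonal_integral_decay
    (H : ℝ) (hH : 1 / 2 < H) (hH1 : H < 1) :
    ∃ c : ℝ, 0 < c ∧ ∀ n : ℕ, 1 ≤ n →
      ∫ z in (0 : ℝ)..1,
        (fbmCov H 1 z) ^ n * z ^ (-(H * n) - H) * (1 - z) ^ (2 * H - 2)
      ≤ c * (n : ℝ) ^ (-((2 * H - 1) / (2 * H))) := by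
  set α := (2 * H - 1) / (2 * H)
  set κ : ℝ := (1 - 2 ^ (H - 1)) / 2
  have hκ : 0 < κ := by
    have : (2 : ℝ) ^ (H - 1) < 1 := rpow_lt_one_of_one_lt_of_neg one_lt_two (by linarith)
    positivity
  have hC : 0 < Gamma α / H + 2 * 4 ^ α / (1 - H) := by
    have : 0 < Gamma α := Gamma_pos_of_pos (div_pos (by linarith) (by linarith))
    have : 0 < 1 - H := by linarith
    positivity
  refine ⟨(Gamma α / H + 2 * 4 ^ α / (1 - H)) * κ ^ (-α), by positivity, fun n hn => ?_⟩
  have hb : 0 < n * κ := mul_pos (by exact_mod_cast hn) hκ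
  calc _ ≤ ∫ z in 0..1, fbmMajorant H (n * κ) z := by
        refine intervalIntegral_mono_of_nonneg_Ioo zero_le_one (fun z hz => ?_) (fun z hz => ?_)
          (intervalIntegrable_fbmMajorant hH hH1 hb)
        · exact mul_nonneg (mul_nonneg (pow_nonneg (fbmCov_one_left_nonneg (by linarith) hz.1.le
            hz.2.le) n) (rpow_nonneg hz.1.le _)) (rpow_nonneg (by linarith [hz.2]) _)
        · exact (fbmCov_integrand_le (by linarith) hH1.le hz.1 hz.2.le n).trans
            (rpow_mul_exp_le_fbmMajorant hH.le hH1.le hb.le hz.1 hz.2.le)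
    _ ≤ (Gamma α / H + 2 * 4 ^ α / (1 - H)) * (n * κ) ^ (-α) :=
        integral_fbmMajorant_le hH hH1 hb
    _ = _ := by rw [mul_rpow (Nat.cast_nonneg n) hκ.le]; ring
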